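/- arXiv:math/0406388 — 3 statements merged into one kernel-verified Lean document; each statement's English description precedes it below -/
import Mathlib

section
/- Let D be a Hurwitz series Φ(U) = Σ_{n≥0} (β_n/n!) U^n over the fraction field K of a characteristic-zero domain D. Then Φ(U) = F(e^U − 1) for some power series F(u) ∈ D[[u]] (i.e. Φ is u-integral) if and only if for every d ≥ 1, the element (1/d!)·(c_{d,1}β_1 + c_{d,2}β_2 + ⋯ + c_{d,d}β_d) lies in D, where the c_{d,r} are the Stirling-type coefficients defined by X(X−1)⋯(X−d+1) = Σ_{r=0}^d c_{d,r} X^r. -/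
/-!
Comparing coefficients, `Φ(U) = F(e^U − 1)` says `β_n = Σ_k k! S(n,k) F_k`, since
`n! [U^n] (e^U − 1)^k = Σ_j (-1)^(k-j) C(k,j) j^n = k! S(n,k)`. Summing against the coefficients
`c_{d,r}` of `X(X−1)⋯(X−d+1)`, whose value at `j` is `d! C(j,d)`, and using binomial inversion
gives `Σ_r c_{d,r} β_r = d! F_d`. Conversely, the system `Σ_r c_{d,r} β_r = d! F_d` is
unitriangular, so it determines `β` from the numbers `d! F_d`: if every `Σ_r c_{d,r} β_r` is
divisible by `d!` in `D`, the quotients are the coefficients of a series `F ∈ D[[u]]`.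
Everything happens in `D`; the fraction field only enters through the injectivity of `D → K`.
-/

open Finset
open scoped Nat

noncomputable section

open Polynomial in
theorem sum_alternating_choose_mul_choose (k d : ℕ) :
    ∑ j ∈ range (k + 1), (-1 : ℤ) ^ (k - j) * k.choose j * j.choose d =
      if d = k then 1 else 0 := by
  have h := congrArg (coeff · d) (show ((X + 1 : ℤ[X]) + -1) ^ k = X ^ k by ring)
  rw [add_pow] at h
  simp only [finsetSum_coeff, coeff_X_pow] at h
  rw [← h]
  refine sum_congr rfl fun j _ => ?_
  rw [show (X + 1 : ℤ[X]) ^ j * (-1) ^ (k - j) * (k.choose j : ℤ[X]) =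
      C ((-1 : ℤ) ^ (k - j) * k.choose j) * (X + 1) ^ j by simp; ring,
    coeff_C_mul, coeff_X_add_one_pow]

theorem sum_descPochhammer_coeff_mul_pow (d j : ℕ) :
    ∑ r ∈ range (d + 1), (descPochhammer ℤ d).coeff r * (j : ℤ) ^ r = d ! * j.choose d := by
  rw [← Polynomial.eval_eq_sum_range' (by rw [descPochhammer_natDegree]; omega),
    descPochhammer_eval_eq_descFactorial, Nat.descFactorial_eq_factorial_mul_choose, Nat.cast_mul]

/-- `k! S(n,k)`, the number of surjections from an `n`-set onto a `k`-set. -/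
def surjCount (n k : ℕ) : ℤ :=
  ∑ j ∈ range (k + 1), (-1) ^ (k - j) * k.choose j * (j : ℤ) ^ n

theorem sum_descPochhammer_coeff_mul_surjCount (d k : ℕ) :
    ∑ r ∈ range (d + 1), (descPochhammer ℤ d).coeff r * surjCount r k =
      if d = k then (d ! : ℤ) else 0 := by
  calc ∑ r ∈ range (d + 1), (descPochhammer ℤ d).coeff r * surjCount r k
      = ∑ j ∈ range (k + 1), (-1 : ℤ) ^ (k - j) * k.choose j *
          ∑ r ∈ range (d + 1), (descPochhammer ℤ d).coeff r * (j : ℤ) ^ r := by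
        simp only [surjCount, mul_sum]
        rw [sum_comm]
        exact sum_congr rfl fun j _ => sum_congr rfl fun r _ => by ring
    _ = d ! * ∑ j ∈ range (k + 1), (-1 : ℤ) ^ (k - j) * k.choose j * j.choose d := by
        simp only [sum_descPochhammer_coeff_mul_pow, mul_sum]
        exact sum_congr rfl fun j _ => by ring
    _ = if d = k then (d ! : ℤ) else 0 := by
        rw [sum_alternating_choose_mul_choose]; simp

theorem descPochhammer_coeff_self (d : ℕ) : (descPochhammer ℤ d).coeff d = 1 := by
  simpa [descPochhammer_natDegree] using (monic_descPochhammer ℤ d).coeff_natDegree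

open PowerSeries

theorem coeff_exp_sub_one_pow (K : Type*) [Field K] [CharZero K] (n k : ℕ) :
    coeff n ((exp K - 1) ^ k) = (surjCount n k : K) / n ! := by
  rw [sub_eq_add_neg, add_pow, map_sum, surjCount, Int.cast_sum, sum_div]
  refine sum_congr rfl fun j _ => ?_
  rw [show exp K ^ j * (-1) ^ (k - j) * (k.choose j : K⟦X⟧) =
      C ((-1 : K) ^ (k - j) * k.choose j) * exp K ^ j by simp; ring,
    coeff_C_mul, exp_pow_eq_rescale_exp, coeff_rescale, coeff_exp]
  push_cast
  ring

theorem surjCount_eq_zero_of_lt {n k : ℕ} (h : n < k) : surjCount n k = 0 := by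
  have hX : X ∣ exp ℚ - 1 := X_dvd_iff.2 (by simp)
  have : (surjCount n k : ℚ) / n ! = 0 :=
    (coeff_exp_sub_one_pow ℚ n k).symm.trans (X_pow_dvd_iff.1 (pow_dvd_pow_of_dvd hX k) n h)
  exact_mod_cast (div_eq_zero_iff.1 this).resolve_right (by positivity)

section Transforms

variable {R : Type*} [CommRing R]

def surjTransform (F : ℕ → R) (n : ℕ) : R :=
  ∑ k ∈ range (n + 1), (surjCount n k : R) * F k

def fallingTransform (β : ℕ → R) (d : ℕ) : R :=
  ∑ r ∈ range (d + 1), ((descPochhammer ℤ d).coeff r : R) * β r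

theorem surjTransform_eq_sum_range (F : ℕ → R) {n N : ℕ} (h : n ≤ N) :
    surjTransform F n = ∑ k ∈ range (N + 1), (surjCount n k : R) * F k :=
  sum_subset (range_subset_range.2 (by omega)) fun k _ hk => by
    rw [surjCount_eq_zero_of_lt (by simpa using hk), Int.cast_zero, zero_mul]

theorem fallingTransform_surjTransform (F : ℕ → R) (d : ℕ) :
    fallingTransform (surjTransform F) d = d ! * F d := by
  calc fallingTransform (surjTransform F) d
      = ∑ k ∈ range (d + 1),
          ((∑ r ∈ range (d + 1), (descPochhammer ℤ d).coeff r * surjCount r k : ℤ) : R) * F k := by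
        simp only [fallingTransform, Int.cast_sum, Int.cast_mul, sum_mul]
        rw [sum_comm]
        refine sum_congr rfl fun r hr => ?_
        rw [surjTransform_eq_sum_range F (Nat.lt_succ_iff.1 (mem_range.1 hr)), mul_sum]
        exact sum_congr rfl fun k _ => by ring
    _ = d ! * F d := by simp [sum_descPochhammer_coeff_mul_surjCount]

theorem fallingTransform_injective :
    Function.Injective (fallingTransform : (ℕ → R) → ℕ → R) := by
  intro x y h
  funext n
  induction n using Nat.strong_induction_on with
  | _ n ih =>
    have hn := congrFun h n
    simp only [fallingTransform, sum_range_succ, descPochhammer_coeff_self, Int.cast_one,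
      one_mul] at hn
    rwa [sum_congr rfl fun r hr => by rw [ih r (mem_range.1 hr)], add_right_inj] at hn

theorem exists_surjTransform_eq_iff (β : ℕ → R) :
    (∃ F, surjTransform F = β) ↔ ∀ d, (d ! : R) ∣ fallingTransform β d := by
  refine ⟨?_, fun h => ?_⟩
  · rintro ⟨F, rfl⟩ d
    exact ⟨F d, fallingTransform_surjTransform F d⟩
  · choose a ha using h
    exact ⟨a, fallingTransform_injective <| funext fun d =>
      (fallingTransform_surjTransform a d).trans (ha d).symm⟩

theorem fallingTransform_eq_sum_Icc (β : ℕ → R) {d : ℕ} (hd : d ≠ 0) :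
    fallingTransform β d = ∑ r ∈ Icc 1 d, ((descPochhammer ℤ d).coeff r : R) * β r := by
  rw [fallingTransform, range_eq_Ico, sum_eq_sum_Ico_succ_bot (by omega),
    Polynomial.coeff_zero_eq_eval_zero, descPochhammer_ne_zero_eval_zero ℤ hd, Int.cast_zero,
    zero_mul, zero_add, Ico_add_one_right_eq_Icc]

theorem factorial_dvd_fallingTransform_iff {S : Type*} [CommRing S] {f : R →+* S}
    (hf : Function.Injective f) (β : ℕ → R) {d : ℕ} (hd : d ≠ 0) :
    (d ! : R) ∣ fallingTransform β d ↔
      ∃ a, f a * d ! = ∑ r ∈ Icc 1 d, ((descPochhammer ℤ d).coeff r : S) * f (β r) := by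
  simp only [fallingTransform_eq_sum_Icc β hd, ← map_intCast f, ← map_natCast f, ← map_mul,
    ← map_sum, hf.eq_iff, Dvd.dvd, mul_comm _ (d ! : R), eq_comm]

end Transforms

/-- The substitution `F ↦ F(e^U − 1)`. -/
def substExp {K : Type*} [Field K] [CharZero K] (F : PowerSeries K) : PowerSeries K :=
  PowerSeries.mk fun n =>
    ∑ k ∈ Finset.range (n + 1),
      (PowerSeries.coeff k F) * PowerSeries.coeff n ((PowerSeries.exp K - 1) ^ k)

theorem substExp_map {R K : Type*} [CommRing R] [Field K] [CharZero K] (f : R →+* K)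
    (F : R⟦X⟧) : substExp (map f F) = mk fun n => f (surjTransform (coeff · F) n) / n ! := by
  ext n
  simp only [substExp, coeff_mk, coeff_map, coeff_exp_sub_one_pow, surjTransform, map_sum,
    map_mul, map_intCast, sum_div]
  exact sum_congr rfl fun k _ => by ring

theorem substExp_map_eq_mk_iff {R K : Type*} [CommRing R] [Field K] [CharZero K] {f : R →+* K}
    (hf : Function.Injective f) (F : R⟦X⟧) (β : ℕ → R) :
    substExp (map f F) = mk (fun n => f (β n) / n !) ↔ surjTransform (coeff · F) = β := by
  have hfac (n : ℕ) : (n ! : K) ≠ 0 := Nat.cast_ne_zero.2 n.factorial_ne_zero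
  simp only [substExp_map, PowerSeries.ext_iff, coeff_mk, div_left_inj' (hfac _), hf.eq_iff,
    funext_iff]

/-- A Hurwitz series `Φ(U) = Σ (β_n/n!) Uⁿ` with `β_n` in a characteristic zero
domain `D` is `u`-integral (i.e. `Φ(U) = F(e^U − 1)` for some `F ∈ D[[u]]`) if and
only if for every `d ≥ 1` the element
`(1/d!)(c_{d,1}β_1 + ⋯ + c_{d,d}β_d)` lies in `D`, where the `c_{d,r}` are defined
by `X(X−1)⋯(X−d+1) = Σ_r c_{d,r} X^r`. -/
theorem hurwitz_u_integral_iff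
    {D : Type*} [CommRing D] [IsDomain D] [CharZero D]
    (β : ℕ → D) :
    (∃ F : PowerSeries D,
        substExp (PowerSeries.map (algebraMap D (FractionRing D)) F) =
          PowerSeries.mk (fun n =>
            algebraMap D (FractionRing D) (β n) / (n.factorial : FractionRing D))) ↔
      (∀ d : ℕ, 1 ≤ d → ∃ a : D,
          (algebraMap D (FractionRing D) a) * (d.factorial : FractionRing D) =
            ∑ r ∈ Finset.Icc 1 d,
              (((descPochhammer ℤ d).coeff r : ℤ) : FractionRing D) *
                algebraMap D (FractionRing D) (β r)) := by
  have hinj : Function.Injective (algebraMap D (FractionRing D)) :=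
    IsFractionRing.injective D (FractionRing D)
  calc _ ↔ ∃ F : ℕ → D, surjTransform F = β := by
        simp only [substExp_map_eq_mk_iff hinj]
        exact ⟨fun ⟨F, hF⟩ => ⟨_, hF⟩, fun ⟨F, hF⟩ => ⟨mk F, by simpa using hF⟩⟩
    _ ↔ ∀ d, (d ! : D) ∣ fallingTransform β d := exists_surjTransform_eq_iff β
    _ ↔ _ := by
        refine ⟨fun h d hd => (factorial_dvd_fallingTransform_iff hinj β (by omega)).1 (h d),
          fun h d => ?_⟩
        rcases Nat.eq_zero_or_pos d with rfl | hd
        · simp [fallingTransform]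
        · exact (factorial_dvd_fallingTransform_iff hinj β (by omega)).2 (h d hd)

end
end

section
/- Let T be a profinite space, F a p-adic local field, S a p-adic Banach space of continuous F-valued functions on T (with sup norm), and μ an F-linear distribution C⁰(Z_p, F) → S. Then μ is bounded (a p-adic measure) if and only if for every t ∈ T the scalar distribution μ(t) : φ ↦ μ(φ)(t) is bounded. -/
/-- Let `T` be a profinite space, `F` a nonarchimedean local field (a complete
nontrivially normed field with ultrametric norm), `S = C(T,F)` with the sup norm,
and `μ : C⁰(ℤ_p, F) → C(T, F)` an `F`-linear distribution.  Then `μ` is bounded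
(a `p`-adic measure) if and only if for every `t ∈ T` the scalar distribution
`μ(t) : φ ↦ μ(φ)(t)` is bounded. -/
theorem measure_iff_pointwise_measure
    (p : ℕ) [Fact p.Prime]
    (F : Type*) [NontriviallyNormedField F] [IsUltrametricDist F] [CompleteSpace F]
    (T : Type*) [TopologicalSpace T] [CompactSpace T] [T2Space T]
    [TotallyDisconnectedSpace T]
    (μ : C(ℤ_[p], F) →ₗ[F] C(T, F)) :
    (∃ C : ℝ, ∀ φ : C(ℤ_[p], F), ‖μ φ‖ ≤ C * ‖φ‖) ↔
      ∀ t : T, ∃ C : ℝ, ∀ φ : C(ℤ_[p], F), ‖(μ φ) t‖ ≤ C * ‖φ‖ := by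
  constructor
  · rintro ⟨C, hC⟩ t
    exact ⟨C, fun φ => ((μ φ).norm_coe_le_norm t).trans (hC φ)⟩
  · intro h
    -- package each pointwise evaluation as a continuous linear map
    let g : T → C(ℤ_[p], F) →L[F] F := fun t =>
      LinearMap.mkContinuousOfExistsBound
        ((ContinuousMap.evalCLM F t : C(T, F) →L[F] F).toLinearMap.comp μ)
        (by
          obtain ⟨C, hC⟩ := h t
          exact ⟨C, fun φ => hC φ⟩)
    have hpt : ∀ φ : C(ℤ_[p], F), ∃ C : ℝ, ∀ t : T, ‖g t φ‖ ≤ C :=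
      fun φ => ⟨‖μ φ‖, fun t => (μ φ).norm_coe_le_norm t⟩
    obtain ⟨C', hC'⟩ := banach_steinhaus hpt
    refine ⟨max C' 0, fun φ => ?_⟩
    refine ContinuousMap.norm_le _ (by positivity) |>.mpr fun t => ?_
    calc ‖(μ φ) t‖ = ‖g t φ‖ := rfl
      _ ≤ ‖g t‖ * ‖φ‖ := (g t).le_opNorm φ
      _ ≤ max C' 0 * ‖φ‖ := by
          have := hC' t
          have h0 : (0:ℝ) ≤ ‖φ‖ := norm_nonneg _
          nlinarith [le_max_left C' 0]
end

section
/- Let μ₁, μ₂ be p-adic distributions on Z_p with values in the space of p-adic K^×-modular forms, such that the k-th moment m_k(μ₁) has weight w_k and m_k(μ₂) has weight −w_k, with the weights w_k pairwise distinct. Then the F-valued distribution μ obtained by composing the convolution μ₁ ∗ μ₂ with the weight-0 projection and the Haar distribution has moments: m_k(μ) = 0 for k odd, and m_{2l}(μ) = binom(2l, l) · ⟨m_l(μ₁), m_l(μ₂)⟩ for k = 2l even. -/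
open Finset

noncomputable section

variable (p : ℕ) [Fact p.Prime]

/-- The monomial `x ↦ x^k` as a continuous function `ℤ_p → ℚ_p`. -/
def powC (k : ℕ) : C(ℤ_[p], ℚ_[p]) :=
  ⟨fun x => (x : ℚ_[p]) ^ k, (continuous_subtype_val.pow k)⟩

/-- Moments of the pairing of two distributions with values in `p`-adic
`K^×`-modular forms:  if the `k`-th moments of `μ₁, μ₂` lie in the weight spaces of
pairwise distinct weights `w_k` and `−w_k` respectively, and the pairing
`L ∘ mult` vanishes on pairs of weights that are not opposite, then the moments of
the paired distribution (whose `k`-th moment is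
`Σ_i C(k,i) L(m_i(μ₁)·m_{k−i}(μ₂))`) vanish for odd `k` and equal
`C(2l,l)·L(m_l(μ₁)·m_l(μ₂))` for `k = 2l`. -/
theorem paired_distribution_moments
    (V : Type*) [CommRing V] [Algebra ℚ_[p] V]
    (L : V →ₗ[ℚ_[p]] ℚ_[p])
    (Sw : ℤ × ℤ → Submodule ℚ_[p] V)
    (hvanish : ∀ v v' : ℤ × ℤ, v' ≠ -v → ∀ f ∈ Sw v, ∀ g ∈ Sw v', L (f * g) = 0)
    (w : ℕ → ℤ × ℤ) (hinj : Function.Injective w)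
    (μ₁ μ₂ : C(ℤ_[p], ℚ_[p]) →ₗ[ℚ_[p]] V)
    (h1 : ∀ k, μ₁ (powC p k) ∈ Sw (w k))
    (h2 : ∀ k, μ₂ (powC p k) ∈ Sw (-(w k))) :
    (∀ k : ℕ, Odd k →
      ∑ i ∈ Finset.range (k + 1),
        (k.choose i : ℚ_[p]) * L (μ₁ (powC p i) * μ₂ (powC p (k - i))) = 0) ∧
    (∀ l : ℕ,
      ∑ i ∈ Finset.range (2 * l + 1),
        ((2 * l).choose i : ℚ_[p]) * L (μ₁ (powC p i) * μ₂ (powC p (2 * l - i))) =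
      ((2 * l).choose l : ℚ_[p]) * L (μ₁ (powC p l) * μ₂ (powC p l))) := by
  have key : ∀ k i : ℕ, i ≠ k - i →
      L (μ₁ (powC p i) * μ₂ (powC p (k - i))) = 0 := by
    intro k i h
    refine hvanish (w i) (-(w (k - i))) ?_ _ (h1 i) _ (h2 (k - i))
    intro he
    exact h (hinj (neg_injective he)).symm
  constructor
  · intro k hk
    refine Finset.sum_eq_zero fun i hi => ?_
    rw [key k i, mul_zero]
    intro he
    have hik : i ≤ k := Nat.lt_succ_iff.mp (Finset.mem_range.mp hi)
    have : k = 2 * i := by omega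
    have := Nat.odd_iff.mp hk
    omega
  · intro l
    rw [Finset.sum_eq_single l]
    · have : 2 * l - l = l := by omega
      rw [this]
    · intro i hi hne
      rw [key (2 * l) i, mul_zero]
      have hik : i ≤ 2 * l := Nat.lt_succ_iff.mp (Finset.mem_range.mp hi)
      omega
    · intro h
      exact absurd (Finset.mem_range.mpr (by omega)) h

end
end
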